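/- arXiv:1803.05652 — 2 statements merged into one kernel-verified Lean document; each statement's English description precedes it below -/
import Mathlib

section
/- Let G be a DAG on [n] that is a δ-local expander, let T ⊆ [n], let 0 < α < δ/2, and let u be α-good under T. Then for every integer r ≥ 1: (i) whenever u + 2r − 1 ≤ n, for all X ⊆ [u, u+r−1] and Y ⊆ [u+r, u+2r−1] with |X| ≥ 2δr and |Y| ≥ 2δr there exist a ∈ X ∖ T and b ∈ Y ∖ T such that (a, b) is an edge of G; and (ii) whenever u − 2r + 1 ≥ 1, for all Y ⊆ [u−r+1, u] and Z ⊆ [u−2r+1, u−r] with |Y| ≥ 2δr and |Z| ≥ 2δr there exist a ∈ Z ∖ T and b ∈ Y ∖ T such that (a, b) is an edge of G. (That is, after deleting the nodes of T, G still has 2δ-local expansion around u.) -/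
/-!
The two windows of length `2r` around an `α`-good node `u` contain at most `2αr < δr` nodes
of `T`. Sets `X`, `Y` of size at least `2δr` inside these windows therefore keep at least `δr`
nodes outside `T`, and `δ`-local expansion around `u` gives an edge between the survivors.
-/

/-- A node `v` is `α`-good under `T`: `v ∉ T` and for every radius `r ≥ 1`,
each of the intervals `[v-r+1, v]` and `[v, v+r-1]` contains at most `α·r`
elements of `T`. -/
def AlphaGood (T : Finset ℕ) (α : ℝ) (v : ℕ) : Prop :=
  v ∉ T ∧ ∀ r : ℕ, 1 ≤ r →
    ((Finset.Icc (v - r + 1) v ∩ T).card : ℝ) ≤ α * r ∧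
    ((Finset.Icc v (v + r - 1) ∩ T).card : ℝ) ≤ α * r

/-- A DAG (edge relation `E` on `[n]`, edges go from smaller to larger) has
`δ`-local expansion around node `v`. -/
def LocalExpansion (n : ℕ) (E : ℕ → ℕ → Prop) (δ : ℝ) (v : ℕ) : Prop :=
  ∀ r : ℕ, 1 ≤ r →
    (v + 2 * r - 1 ≤ n →
      ∀ W ⊆ Finset.Icc v (v + r - 1), ∀ X ⊆ Finset.Icc (v + r) (v + 2 * r - 1),
        δ * r ≤ (W.card : ℝ) → δ * r ≤ (X.card : ℝ) →
          ∃ a ∈ W, ∃ b ∈ X, E a b) ∧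
    (2 * r ≤ v →
      ∀ Y ⊆ Finset.Icc (v - r + 1) v, ∀ Z ⊆ Finset.Icc (v - 2 * r + 1) (v - r),
        δ * r ≤ (Y.card : ℝ) → δ * r ≤ (Z.card : ℝ) →
          ∃ a ∈ Z, ∃ b ∈ Y, E a b)

theorem AlphaGood.card_inter_Icc_two_mul_le {T : Finset ℕ} {α δ : ℝ} {u : ℕ}
    (hGood : AlphaGood T α u) (hαδ : 2 * α ≤ δ) {r : ℕ} (hr : 1 ≤ r) :
    ((Finset.Icc (u - 2 * r + 1) u ∩ T).card : ℝ) ≤ δ * r ∧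
      ((Finset.Icc u (u + 2 * r - 1) ∩ T).card : ℝ) ≤ δ * r := by
  have hr₀ : (0 : ℝ) ≤ r := r.cast_nonneg
  have hwin : α * (2 * r : ℕ) ≤ δ * r := by push_cast; nlinarith
  obtain ⟨hleft, hright⟩ := hGood.2 (2 * r) (by omega)
  exact ⟨hleft.trans hwin, hright.trans hwin⟩

theorem Finset.card_sub_card_inter_le_card_sdiff {β : Type*} [DecidableEq β]
    {s I t : Finset β} (hs : s ⊆ I) : (s.card : ℝ) - (I ∩ t).card ≤ (s \ t).card := by
  have hmono : (s ∩ t).card ≤ (I ∩ t).card :=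
    Finset.card_le_card (Finset.inter_subset_inter_right hs)
  have hsplit : s.card ≤ (s \ t).card + (I ∩ t).card := by
    rw [← Finset.card_sdiff_add_card_inter s t]
    exact Nat.add_le_add_left hmono _
  rw [sub_le_iff_le_add]
  exact_mod_cast hsplit

theorem good_node_expansion_after_deletion_general (n : ℕ) (E : ℕ → ℕ → Prop)
    (δ : ℝ)
    (hLE : ∀ v ∈ Finset.Icc 1 n, LocalExpansion n E δ v)
    (T : Finset ℕ)
    (α : ℝ) (hα : α < δ / 2)
    (u : ℕ) (hu : u ∈ Finset.Icc 1 n) (hGood : AlphaGood T α u) :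
    ∀ r : ℕ, 1 ≤ r →
      (u + 2 * r - 1 ≤ n →
        ∀ X ⊆ Finset.Icc u (u + r - 1), ∀ Y ⊆ Finset.Icc (u + r) (u + 2 * r - 1),
          2 * δ * r ≤ (X.card : ℝ) → 2 * δ * r ≤ (Y.card : ℝ) →
            ∃ a ∈ X, a ∉ T ∧ ∃ b ∈ Y, b ∉ T ∧ E a b) ∧
      (2 * r ≤ u →
        ∀ Y ⊆ Finset.Icc (u - r + 1) u, ∀ Z ⊆ Finset.Icc (u - 2 * r + 1) (u - r),
          2 * δ * r ≤ (Y.card : ℝ) → 2 * δ * r ≤ (Z.card : ℝ) →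
            ∃ a ∈ Z, a ∉ T ∧ ∃ b ∈ Y, b ∉ T ∧ E a b) := by
  intro r hr
  obtain ⟨hleft, hright⟩ := hGood.card_inter_Icc_two_mul_le (δ := δ) (by linarith) hr
  have hsurvive {s I : Finset ℕ} (hs : s ⊆ I) (hI : ((I ∩ T).card : ℝ) ≤ δ * r)
      (hcard : 2 * δ * r ≤ s.card) : δ * r ≤ (s \ T).card := by
    linarith [Finset.card_sub_card_inter_le_card_sdiff (t := T) hs]
  constructor
  · intro hn X hX Y hY hXc hYc
    have hX' : X ⊆ Finset.Icc u (u + 2 * r - 1) :=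
      hX.trans (Finset.Icc_subset_Icc le_rfl (by omega))
    have hY' : Y ⊆ Finset.Icc u (u + 2 * r - 1) :=
      hY.trans (Finset.Icc_subset_Icc (by omega) le_rfl)
    obtain ⟨a, ha, b, hb, hab⟩ := (hLE u hu r hr).1 hn (X \ T) (Finset.sdiff_subset.trans hX)
      (Y \ T) (Finset.sdiff_subset.trans hY) (hsurvive hX' hright hXc) (hsurvive hY' hright hYc)
    rw [Finset.mem_sdiff] at ha hb
    exact ⟨a, ha.1, ha.2, b, hb.1, hb.2, hab⟩
  · intro hn Y hY Z hZ hYc hZc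
    have hY' : Y ⊆ Finset.Icc (u - 2 * r + 1) u :=
      hY.trans (Finset.Icc_subset_Icc (by omega) le_rfl)
    have hZ' : Z ⊆ Finset.Icc (u - 2 * r + 1) u :=
      hZ.trans (Finset.Icc_subset_Icc le_rfl (by omega))
    obtain ⟨a, ha, b, hb, hab⟩ := (hLE u hu r hr).2 hn (Y \ T) (Finset.sdiff_subset.trans hY)
      (Z \ T) (Finset.sdiff_subset.trans hZ) (hsurvive hY' hleft hYc) (hsurvive hZ' hleft hZc)
    rw [Finset.mem_sdiff] at ha hb
    exact ⟨a, ha.1, ha.2, b, hb.1, hb.2, hab⟩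

/-- If `G` is a `δ`-local expander, `0 < α < δ/2`, and `u` is `α`-good under `T`,
then after deleting the nodes of `T` the graph still has `2δ`-local
expansion around `u`. -/
theorem good_node_expansion_after_deletion (n : ℕ) (E : ℕ → ℕ → Prop)
    (hE : ∀ a b, E a b → 1 ≤ a ∧ a < b ∧ b ≤ n)
    (δ : ℝ) (hδ : 0 < δ)
    (hLE : ∀ v ∈ Finset.Icc 1 n, LocalExpansion n E δ v)
    (T : Finset ℕ) (hT : T ⊆ Finset.Icc 1 n)
    (α : ℝ) (hα0 : 0 < α) (hα : α < δ / 2)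
    (u : ℕ) (hu : u ∈ Finset.Icc 1 n) (hGood : AlphaGood T α u) :
    ∀ r : ℕ, 1 ≤ r →
      (u + 2 * r - 1 ≤ n →
        ∀ X ⊆ Finset.Icc u (u + r - 1), ∀ Y ⊆ Finset.Icc (u + r) (u + 2 * r - 1),
          2 * δ * r ≤ (X.card : ℝ) → 2 * δ * r ≤ (Y.card : ℝ) →
            ∃ a ∈ X, a ∉ T ∧ ∃ b ∈ Y, b ∉ T ∧ E a b) ∧
      (2 * r ≤ u →
        ∀ Y ⊆ Finset.Icc (u - r + 1) u, ∀ Z ⊆ Finset.Icc (u - 2 * r + 1) (u - r),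
          2 * δ * r ≤ (Y.card : ℝ) → 2 * δ * r ≤ (Z.card : ℝ) →
            ∃ a ∈ Z, a ∉ T ∧ ∃ b ∈ Y, b ∉ T ∧ E a b) :=
  good_node_expansion_after_deletion_general n E δ hLE T α hα u hu hGood
end

section
/- Let r ≥ 1 and u be such that the intervals A = [u, u+r−1] and B = [u+r, u+2r−1] lie inside [n]. Let E ⊆ A × B be a set of edges such that every vertex of A ∪ B is incident to at most d edges of E. Let T ⊆ [n], let 0 < α < 1, and suppose u is α-good under T. Then the number of edges of E incident to at least one vertex of T is at most 3αrd. -/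
open Finset

section Incidence

variable {V : Type*} [DecidableEq V]

theorem card_filter_incident_le_card_mul (E : Finset (V × V)) (S : Finset V) (d : ℕ)
    (hdeg : ∀ v ∈ S, (E.filter fun e => e.1 = v ∨ e.2 = v).card ≤ d) :
    (E.filter fun e => e.1 ∈ S ∨ e.2 ∈ S).card ≤ S.card * d := by
  have hcover : (E.filter fun e => e.1 ∈ S ∨ e.2 ∈ S) ⊆
      S.biUnion fun v => E.filter fun e => e.1 = v ∨ e.2 = v := by
    intro e he
    simp only [mem_filter, mem_biUnion] at he ⊢
    rcases he with ⟨heE, h1 | h2⟩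
    · exact ⟨e.1, h1, heE, Or.inl rfl⟩
    · exact ⟨e.2, h2, heE, Or.inr rfl⟩
  calc (E.filter fun e => e.1 ∈ S ∨ e.2 ∈ S).card
      ≤ (S.biUnion fun v => E.filter fun e => e.1 = v ∨ e.2 = v).card := card_le_card hcover
    _ ≤ ∑ v ∈ S, (E.filter fun e => e.1 = v ∨ e.2 = v).card := card_biUnion_le
    _ ≤ ∑ _v ∈ S, d := sum_le_sum hdeg
    _ = S.card * d := by rw [sum_const, smul_eq_mul]

theorem filter_incident_eq_inter {E : Finset (V × V)} {W : Finset V}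
    (hE : ∀ e ∈ E, e.1 ∈ W ∧ e.2 ∈ W) (T : Finset V) :
    (E.filter fun e => e.1 ∈ T ∨ e.2 ∈ T) = E.filter fun e => e.1 ∈ W ∩ T ∨ e.2 ∈ W ∩ T := by
  refine filter_congr fun e he => ?_
  simp only [mem_inter, (hE e he).1, (hE e he).2, true_and]

end Incidence

theorem AlphaGood.card_Icc_inter_le {T : Finset ℕ} {α : ℝ} {u : ℕ} (hGood : AlphaGood T α u)
    {r : ℕ} (hr : 1 ≤ r) : ((Icc u (u + 2 * r - 1) ∩ T).card : ℝ) ≤ 2 * α * r := by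
  have h := (hGood.2 (2 * r) (by omega)).2
  push_cast at h
  linarith

theorem red_edges_bound_general (u r d : ℕ) (hr : 1 ≤ r)
    (E : Finset (ℕ × ℕ))
    (hE : E ⊆ Finset.Icc u (u + r - 1) ×ˢ Finset.Icc (u + r) (u + 2 * r - 1))
    (hdeg : ∀ v : ℕ, (E.filter fun e => e.1 = v ∨ e.2 = v).card ≤ d)
    (T : Finset ℕ)
    (α : ℝ) (hα0 : 0 < α)
    (hGood : AlphaGood T α u) :
    ((E.filter fun e => e.1 ∈ T ∨ e.2 ∈ T).card : ℝ) ≤ 3 * α * r * d := by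
  have hspan : ∀ e ∈ E, e.1 ∈ Icc u (u + 2 * r - 1) ∧ e.2 ∈ Icc u (u + 2 * r - 1) := by
    intro e he
    have := mem_product.1 (hE he)
    simp only [mem_Icc] at this ⊢
    omega
  rw [filter_incident_eq_inter hspan]
  have hcard := card_filter_incident_le_card_mul E (Icc u (u + 2 * r - 1) ∩ T) d fun v _ => hdeg v
  have hS := hGood.card_Icc_inter_le hr
  calc _ ≤ ((Icc u (u + 2 * r - 1) ∩ T).card : ℝ) * d := by exact_mod_cast hcard
    _ ≤ 2 * α * r * d := by gcongr
    _ ≤ 3 * α * r * d := by gcongr; linarith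

/-- If `u` is `α`-good under `T` and `E` is a set of edges between
`A = [u, u+r-1]` and `B = [u+r, u+2r-1]` in which every vertex is incident to
at most `d` edges, then at most `3αrd` edges of `E` are incident to `T`. -/
theorem red_edges_bound (n u r d : ℕ) (hr : 1 ≤ r) (hu : 1 ≤ u)
    (hn : u + 2 * r - 1 ≤ n)
    (E : Finset (ℕ × ℕ))
    (hE : E ⊆ Finset.Icc u (u + r - 1) ×ˢ Finset.Icc (u + r) (u + 2 * r - 1))
    (hdeg : ∀ v : ℕ, (E.filter fun e => e.1 = v ∨ e.2 = v).card ≤ d)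
    (T : Finset ℕ) (hT : T ⊆ Finset.Icc 1 n)
    (α : ℝ) (hα0 : 0 < α) (hα1 : α < 1)
    (hGood : AlphaGood T α u) :
    ((E.filter fun e => e.1 ∈ T ∨ e.2 ∈ T).card : ℝ) ≤ 3 * α * r * d :=
  red_edges_bound_general u r d hr E hE hdeg T α hα0 hGood
end
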